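/- Let U and V be m-dimensional linear subspaces of ℝⁿ with orthonormal bases (e₁,…,e_m) of U and (f₁,…,f_m) of V such that |e_i − f_i| ≤ ϑ for every i = 1,…,m. Then d_G(U,V) ≤ 2·m·ϑ. -/

import Mathlib

open Metric MeasureTheory Filter
open scoped RealInnerProductSpace ENNReal NNReal

noncomputable section

abbrev Euc (n : ℕ) := EuclideanSpace ℝ (Fin n)

variable {n : ℕ}

/-- Orthogonal projection onto a subspace, as a continuous linear map on the whole space. -/
noncomputable def projCLM (U : Submodule ℝ (Euc n)) : Euc n →L[ℝ] Euc n :=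
  U.subtypeL.comp (U.orthogonalProjection)

/-- Orthogonal projection onto the orthogonal complement. -/
noncomputable def QCLM (U : Submodule ℝ (Euc n)) : Euc n →L[ℝ] Euc n :=
  projCLM Uᗮ

/-- The metric on the Grassmannian: operator norm distance of orthogonal projections. -/
noncomputable def dG (U V : Submodule ℝ (Euc n)) : ℝ :=
  ‖projCLM U - projCLM V‖

/-- The cone with axis `Hᗮ` and "angle" `δ`. -/
def angCone (δ : ℝ) (H : Submodule ℝ (Euc n)) : Set (Euc n) :=
  {x | δ * ‖x‖ ≤ ‖QCLM H x‖}

/-- The shell (n-annulus) of radii `r` and `R`. -/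
def shell (r R : ℝ) : Set (Euc n) :=
  Metric.ball (0 : Euc n) R \ Metric.closedBall (0 : Euc n) r

/-- Conical cap: intersection of a cone and a shell. -/
def conicalCap (δ : ℝ) (H : Submodule ℝ (Euc n)) (r R : ℝ) : Set (Euc n) :=
  angCone δ H ∩ shell r R

/-- Symmetrized Hausdorff-type distance: sum of the two one-sided deviations. -/
noncomputable def hDistSum (A B : Set (Euc n)) : ℝ :=
  (⨆ y : A, Metric.infDist (y : Euc n) B) + (⨆ y : B, Metric.infDist (y : Euc n) A)

/-- Jones β-number (closed-ball version). -/
noncomputable def betaBar (m : ℕ) (S : Set (Euc n)) (x : Euc n) (r : ℝ) : ℝ :=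
  (1/r) * ⨅ H : {H : Submodule ℝ (Euc n) // Module.finrank ℝ H = m},
    ⨆ z : ↥(S ∩ Metric.closedBall x r), ‖QCLM H.1 ((z : Euc n) - x)‖

/-- Jones β-number (open-ball version). -/
noncomputable def betaOpen (m : ℕ) (S : Set (Euc n)) (x : Euc n) (r : ℝ) : ℝ :=
  (1/r) * ⨅ H : {H : Submodule ℝ (Euc n) // Module.finrank ℝ H = m},
    ⨆ z : ↥(S ∩ Metric.ball x r), ‖QCLM H.1 ((z : Euc n) - x)‖

/-- Reifenberg θ-number (closed-ball version). -/
noncomputable def thetaBar (m : ℕ) (S : Set (Euc n)) (x : Euc n) (r : ℝ) : ℝ :=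
  (1/r) * ⨅ H : {H : Submodule ℝ (Euc n) // Module.finrank ℝ H = m},
    hDistSum (S ∩ Metric.closedBall x r)
      ((fun v => x + v) '' (H.1 : Set (Euc n)) ∩ Metric.closedBall x r)

/-- Reifenberg θ-number (open-ball version). -/
noncomputable def thetaOpen (m : ℕ) (S : Set (Euc n)) (x : Euc n) (r : ℝ) : ℝ :=
  (1/r) * ⨅ H : {H : Submodule ℝ (Euc n) // Module.finrank ℝ H = m},
    hDistSum (S ∩ Metric.ball x r)
      ((fun v => x + v) '' (H.1 : Set (Euc n)) ∩ Metric.ball x r)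

/-- Discrete Menger-type curvature of an `(m+2)`-tuple of points. -/
noncomputable def discCurv (m : ℕ) (x : Fin (m+2) → Euc n) : ℝ :=
  (μH[((m : ℝ) + 1)] (convexHull ℝ (Set.range x))).toReal / Metric.diam (Set.range x) ^ (m+2)

/-- Iterated lower integral over `k` copies of a measure. -/
noncomputable def multiLIntegral (μ : Measure (Euc n)) :
    (k : ℕ) → ((Fin k → Euc n) → ℝ≥0∞) → ℝ≥0∞
  | 0, f => f Fin.elim0
  | k+1, f => ∫⁻ x, multiLIntegral μ k (fun v => f (Fin.cons x v)) ∂μ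

/-- The `p`-energy of a set: the integral of `K^p` over `(m+2)`-tuples of points of `S`,
with respect to the `m`-dimensional Hausdorff measure restricted to `S`. -/
noncomputable def energy (m : ℕ) (p : ℝ) (S : Set (Euc n)) : ℝ≥0∞ :=
  multiLIntegral ((μH[(m : ℝ)]).restrict S) (m+2) fun x => ENNReal.ofReal (discCurv m x ^ p)

/-- The class `V_k(η,d)` of `(η,d)`-voluminous `(k+1)`-simplices. -/
def IsVol (k : ℕ) (η d : ℝ) (x : Fin (k+2) → Euc n) : Prop :=
  (∃ c : Euc n, convexHull ℝ (Set.range x) ⊆ Metric.closedBall c d) ∧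
  ENNReal.ofReal ((η * d) ^ k) ≤
    μH[(k : ℝ)] (convexHull ℝ (Set.range fun i : Fin (k+1) => x i.castSucc)) ∧
  η * d ≤ Metric.infDist (x (Fin.last (k+1)))
    (affineSpan ℝ (Set.range fun i : Fin (k+1) => x i.castSucc) : Set (Euc n))

/-- Pseudo-distance between two simplices given by vertex tuples. -/
noncomputable def simplexDist (k : ℕ) (x y : Fin (k+2) → Euc n) : ℝ :=
  ⨅ σ : Equiv.Perm (Fin (k+2)), ⨆ i, dist (x i) (y (σ i))

/-- Best approximating `m`-planes for `S` in the closed ball `B̄(x,r)`. -/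
def BAP (m : ℕ) (S : Set (Euc n)) (x : Euc n) (r : ℝ) : Set (Submodule ℝ (Euc n)) :=
  {H | Module.finrank ℝ H = m ∧
    hDistSum (S ∩ Metric.closedBall x r)
      ((fun v => x + v) '' (H : Set (Euc n)) ∩ Metric.closedBall x r) ≤ r * thetaBar m S x r}

/-- `m`-fine sets with constants `A`, `R`, `M`. -/
def IsFine (m : ℕ) (S : Set (Euc n)) (A R M : ℝ) : Prop :=
  IsCompact S ∧ 0 < A ∧ 0 < R ∧ 2 ≤ M ∧
  (∀ x ∈ S, ∀ r : ℝ, 0 < r → r ≤ R →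
    ENNReal.ofReal (A * r ^ m) ≤ μH[(m : ℝ)] (S ∩ Metric.ball x r)) ∧
  (∀ x ∈ S, ∀ r : ℝ, 0 < r → r ≤ R → thetaBar m S x r ≤ M * betaBar m S x r)

/-- `T` is the (m-dimensional) tangent plane of `S` at `x`: the limit in the Grassmannian
metric of best approximating planes as the scale tends to `0`. -/
def IsTangentAt (m : ℕ) (S : Set (Euc n)) (x : Euc n) (T : Submodule ℝ (Euc n)) : Prop :=
  Module.finrank ℝ T = m ∧
  ∀ ε > 0, ∃ r₀ > 0, ∀ r : ℝ, 0 < r → r ≤ r₀ → ∀ H ∈ BAP m S x r, dG T H ≤ ε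

/-!
The projection onto the span of an orthonormal family `e` is `∑ i, ⟪e i, ·⟫ e i`, so `π_U - π_V`
is a sum of `m` differences of rank-one operators. Since
`⟪a, ·⟫ a - ⟪b, ·⟫ b = ⟪a - b, ·⟫ a + ⟪b, ·⟫ (a - b)`, each has norm at most `2 ‖a - b‖`
when `a`, `b` are unit vectors.
-/

open InnerProductSpace

section

variable {𝕜 E : Type*} [RCLike 𝕜] [NormedAddCommGroup E] [InnerProductSpace 𝕜 E]

theorem Orthonormal.starProjection_span_eq_sum_rankOne {ι : Type*} [Fintype ι] {v : ι → E}
    (hv : Orthonormal 𝕜 v) [(Submodule.span 𝕜 (Set.range v)).HasOrthogonalProjection] :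
    (Submodule.span 𝕜 (Set.range v)).starProjection = ∑ i, rankOne 𝕜 (v i) (v i) := by
  have hsp := (Module.Basis.span hv.linearIndependent).span_eq
  rw [funext (Module.Basis.span_apply hv.linearIndependent)] at hsp
  exact (OrthonormalBasis.mk (orthonormal_span hv) hsp.ge).starProjection_eq_sum_rankOne.trans
    (by simp)

theorem norm_rankOne_self_sub_rankOne_self_le {a b : E} (ha : ‖a‖ ≤ 1) (hb : ‖b‖ ≤ 1) :
    ‖rankOne 𝕜 a a - rankOne 𝕜 b b‖ ≤ 2 * ‖a - b‖ := by
  have hsplit : rankOne 𝕜 a a - rankOne 𝕜 b b = rankOne 𝕜 a (a - b) + rankOne 𝕜 (a - b) b := by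
    simp only [map_sub, sub_apply]
    abel
  calc ‖rankOne 𝕜 a a - rankOne 𝕜 b b‖
      ≤ ‖a‖ * ‖a - b‖ + ‖a - b‖ * ‖b‖ := by
        rw [hsplit, ← norm_rankOne (𝕜 := 𝕜), ← norm_rankOne (𝕜 := 𝕜)]
        exact norm_add_le _ _
    _ ≤ 1 * ‖a - b‖ + ‖a - b‖ * 1 := by gcongr
    _ = 2 * ‖a - b‖ := by ring

theorem Orthonormal.norm_starProjection_span_sub_le {ι : Type*} [Fintype ι] {e f : ι → E}
    (he : Orthonormal 𝕜 e) (hf : Orthonormal 𝕜 f)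
    [(Submodule.span 𝕜 (Set.range e)).HasOrthogonalProjection]
    [(Submodule.span 𝕜 (Set.range f)).HasOrthogonalProjection]
    {ϑ : ℝ} (hϑ : ∀ i, ‖e i - f i‖ ≤ ϑ) :
    ‖(Submodule.span 𝕜 (Set.range e)).starProjection -
        (Submodule.span 𝕜 (Set.range f)).starProjection‖ ≤ 2 * Fintype.card ι * ϑ := by
  rw [he.starProjection_span_eq_sum_rankOne, hf.starProjection_span_eq_sum_rankOne,
    ← Finset.sum_sub_distrib]
  calc ‖∑ i, (rankOne 𝕜 (e i) (e i) - rankOne 𝕜 (f i) (f i))‖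
      ≤ ∑ i, ‖rankOne 𝕜 (e i) (e i) - rankOne 𝕜 (f i) (f i)‖ := norm_sum_le _ _
    _ ≤ ∑ _i : ι, 2 * ϑ := Finset.sum_le_sum fun i _ =>
        (norm_rankOne_self_sub_rankOne_self_le (he.1 i).le (hf.1 i).le).trans
          (by gcongr; exact hϑ i)
    _ = 2 * Fintype.card ι * ϑ := by
        rw [Finset.sum_const, Finset.card_univ, nsmul_eq_mul]
        ring

end

theorem statement0_general (m : ℕ) (n : ℕ)
    (U V : Submodule ℝ (Euc n))
    (e f : Fin m → Euc n)
    (he : Orthonormal ℝ e) (hf : Orthonormal ℝ f)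
    (heU : Submodule.span ℝ (Set.range e) = U)
    (hfV : Submodule.span ℝ (Set.range f) = V)
    (ϑ : ℝ) (hϑ : ∀ i, ‖e i - f i‖ ≤ ϑ) :
    dG U V ≤ 2 * m * ϑ := by
  subst heU hfV
  have h := he.norm_starProjection_span_sub_le hf hϑ
  rwa [Fintype.card_fin] at h

/-- If `U`, `V` are `m`-dimensional subspaces of `ℝⁿ` with orthonormal bases
`e`, `f` satisfying `‖e i − f i‖ ≤ ϑ`, then `d_G(U,V) ≤ 2·m·ϑ`. -/
theorem statement0 (m : ℕ) (hm : 0 < m) (n : ℕ) (hmn : m < n)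
    (U V : Submodule ℝ (Euc n))
    (hU : Module.finrank ℝ U = m) (hV : Module.finrank ℝ V = m)
    (e f : Fin m → Euc n)
    (he : Orthonormal ℝ e) (hf : Orthonormal ℝ f)
    (heU : Submodule.span ℝ (Set.range e) = U)
    (hfV : Submodule.span ℝ (Set.range f) = V)
    (ϑ : ℝ) (hϑ : ∀ i, ‖e i - f i‖ ≤ ϑ) :
    dG U V ≤ 2 * m * ϑ :=
  statement0_general m n U V e f he hf heU hfV ϑ hϑ
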